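/- arXiv:math/0703803 — 3 statements merged into one kernel-verified Lean document; each statement's English description precedes it below -/
import Mathlib

section
/- Let m ≥ 1, let Q be an m×m signed permutation matrix, and let i, j be indices with Q_{i,j} ≠ 0. Then AD(Q) is a signed permutation matrix and δ_{m+1−i}(AD(Q)) = δ_i(Q). -/
open Matrix
open scoped Classical

noncomputable section

def IsSignedPerm {m : ℕ} (Q : Matrix (Fin m) (Fin m) ℝ) : Prop :=
  (∀ i, ∃! j, Q i j ≠ 0) ∧ (∀ j, ∃! i, Q i j ≠ 0) ∧
    ∀ i j, Q i j ≠ 0 → Q i j = 1 ∨ Q i j = -1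

def NE {m : ℕ} (Q : Matrix (Fin m) (Fin m) ℝ) (i j : Fin m) : ℕ :=
  (Finset.univ.filter fun p : Fin m × Fin m => p.1 < i ∧ j < p.2 ∧ Q p.1 p.2 ≠ 0).card

def SW {m : ℕ} (Q : Matrix (Fin m) (Fin m) ℝ) (i j : Fin m) : ℕ := NE Qᵀ j i

def deltaRow {m : ℕ} (Q : Matrix (Fin m) (Fin m) ℝ) (i : Fin m) : ℝ :=
  ∑ j, Q i j * (-1 : ℝ) ^ NE Q i j

def DeltaM {m : ℕ} (Q : Matrix (Fin m) (Fin m) ℝ) : Matrix (Fin m) (Fin m) ℝ :=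
  Matrix.diagonal (deltaRow Q)

def sFun {m : ℕ} (Q : Matrix (Fin m) (Fin m) ℝ) : ℝ := (DeltaM Q).trace

def Jplus (m : ℕ) : Matrix (Fin m) (Fin m) ℝ :=
  Matrix.diagonal fun i => (-1 : ℝ) ^ (i : ℕ)

def TR {m : ℕ} (Q : Matrix (Fin m) (Fin m) ℝ) : Matrix (Fin m) (Fin m) ℝ :=
  Jplus m * Qᵀ * Jplus m

def Amat (m : ℕ) : Matrix (Fin m) (Fin m) ℝ :=
  Matrix.of fun i j => if (i : ℕ) + (j : ℕ) = m - 1 then (-1 : ℝ) ^ (i : ℕ) else 0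

def AD {m : ℕ} (Q : Matrix (Fin m) (Fin m) ℝ) : Matrix (Fin m) (Fin m) ℝ :=
  (Amat m)ᵀ * Q * Amat m

def IsUpperPos {m : ℕ} (R : Matrix (Fin m) (Fin m) ℝ) : Prop :=
  (∀ i j, j < i → R i j = 0) ∧ ∀ i, 0 < R i i

def Wmat {m : ℕ} (γ : ℝ → Fin m → ℝ) (t : ℝ) : Matrix (Fin m) (Fin m) ℝ :=
  Matrix.of fun i j => iteratedDeriv (j : ℕ) γ t i

def Wronskian {m : ℕ} (γ : ℝ → Fin m → ℝ) (t : ℝ) : ℝ := (Wmat γ t).det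

def PosLocConv {m : ℕ} (γ : ℝ → Fin m → ℝ) : Prop :=
  ∀ t ∈ Set.Icc (0 : ℝ) 1, 0 < Wronskian γ t

def IsFrameAt {m : ℕ} (γ : ℝ → Fin m → ℝ) (t : ℝ) (F : Matrix (Fin m) (Fin m) ℝ) : Prop :=
  Fᵀ * F = 1 ∧ F.det = 1 ∧ ∃ R, IsUpperPos R ∧ Wmat γ t = F * R

def IsFrenet {m : ℕ} (γ : ℝ → Fin m → ℝ) (F : ℝ → Matrix (Fin m) (Fin m) ℝ) : Prop :=
  ∀ t ∈ Set.Icc (0 : ℝ) 1, IsFrameAt γ t (F t)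

def e1 {m : ℕ} : Fin m → ℝ := fun i => if (i : ℕ) = 0 then 1 else 0

def frobNorm {m : ℕ} (M : Matrix (Fin m) (Fin m) ℝ) : ℝ :=
  Real.sqrt (∑ i, ∑ j, (M i j) ^ 2)

-- auxiliary lemmas

lemma Amat_apply' {m : ℕ} (k a : Fin m) :
    Amat m k a = if k = a.rev then (-1:ℝ)^(k:ℕ) else 0 := by
  have hk := k.isLt; have ha := a.isLt
  have : ((k : ℕ) + (a : ℕ) = m - 1) ↔ k = a.rev := by
    rw [Fin.ext_iff, Fin.val_rev]; omega
  simp only [Amat, Matrix.of_apply]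
  split_ifs with h1 h2 h2
  · rfl
  · exact absurd (this.mp h1) h2
  · exact absurd (this.mpr h2) h1
  · rfl

lemma AD_apply' {m : ℕ} (Q : Matrix (Fin m) (Fin m) ℝ) (a b : Fin m) :
    AD Q a b = (-1:ℝ)^((a.rev : ℕ) + (b.rev : ℕ)) * Q a.rev b.rev := by
  simp only [AD, Matrix.mul_apply, Matrix.transpose_apply]
  rw [Finset.sum_eq_single b.rev]
  · rw [Finset.sum_eq_single a.rev]
    · rw [Amat_apply', Amat_apply', if_pos rfl, if_pos rfl, pow_add]; ring
    · intro k _ hk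
      rw [Amat_apply', if_neg hk, zero_mul]
    · intro h; exact absurd (Finset.mem_univ _) h
  · intro l _ hl
    rw [Amat_apply' l b, if_neg hl, mul_zero]
  · intro h; exact absurd (Finset.mem_univ _) h

lemma NE_eq_rowcount {m : ℕ} (R : Matrix (Fin m) (Fin m) ℝ) (τ : Fin m → Fin m)
    (hτ : ∀ r c, R r c ≠ 0 ↔ c = τ r) (a b : Fin m) :
    NE R a b = (Finset.univ.filter fun r : Fin m => r < a ∧ b < τ r).card := by
  unfold NE
  have himg : (Finset.univ.filter fun p : Fin m × Fin m => p.1 < a ∧ b < p.2 ∧ R p.1 p.2 ≠ 0)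
      = (Finset.univ.filter fun r : Fin m => r < a ∧ b < τ r).image (fun r => (r, τ r)) := by
    ext p
    simp only [Finset.mem_filter, Finset.mem_univ, true_and, Finset.mem_image]
    constructor
    · rintro ⟨h1, h2, h3⟩
      exact ⟨p.1, ⟨h1, (hτ _ _).mp h3 ▸ h2⟩, by rw [← (hτ _ _).mp h3]⟩
    · rintro ⟨r, ⟨h1, h2⟩, rfl⟩
      exact ⟨h1, h2, (hτ _ _).mpr rfl⟩
  rw [himg, Finset.card_image_of_injective _ (fun x y h => congrArg Prod.fst h)]

lemma card_filter_lt {m : ℕ} (i : Fin m) :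
    ((Finset.univ.filter fun r : Fin m => r < i).card) = (i : ℕ) := by
  have : (Finset.univ.filter fun r : Fin m => r < i) = Finset.Iio i := by
    ext r; simp
  rw [this]; simp [Fin.card_Iio]

theorem stmt1 (m : ℕ) (hm : 1 ≤ m) (Q : Matrix (Fin m) (Fin m) ℝ) (hQ : IsSignedPerm Q)
    (i j : Fin m) (hij : Q i j ≠ 0) :
    IsSignedPerm (AD Q) ∧ deltaRow (AD Q) i.rev = deltaRow Q i := by
  -- row map σ
  have hrow := hQ.1
  have hcol := hQ.2.1
  set σ : Fin m → Fin m := fun r => (hrow r).choose with hσdef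
  have hσ : ∀ r c, Q r c ≠ 0 ↔ c = σ r := by
    intro r c
    constructor
    · intro h; exact ((hrow r).choose_spec.2 c h)
    · intro h; rw [h]; exact (hrow r).choose_spec.1
  have hσinj : Function.Injective σ := by
    intro x y hxy
    have hx : Q x (σ x) ≠ 0 := (hσ x (σ x)).mpr rfl
    have hy : Q y (σ x) ≠ 0 := by rw [hxy]; exact (hσ y (σ y)).mpr rfl
    exact ((hcol (σ x)).choose_spec.2 x hx).trans ((hcol (σ x)).choose_spec.2 y hy).symm
  have hσi : σ i = j := ((hσ i j).mp hij).symm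
  -- row map for AD Q
  set τ : Fin m → Fin m := fun a => (σ a.rev).rev with hτdef
  have hτ : ∀ a c, AD Q a c ≠ 0 ↔ c = τ a := by
    intro a c
    rw [AD_apply']
    constructor
    · intro h
      have h2 : Q a.rev c.rev ≠ 0 := fun h0 => h (by rw [h0, mul_zero])
      have := (hσ a.rev c.rev).mp h2
      simp only [hτdef, ← this, Fin.rev_rev]
    · intro h
      have hc : c.rev = σ a.rev := by rw [h]; simp [hτdef, Fin.rev_rev]
      have h2 : Q a.rev c.rev ≠ 0 := (hσ a.rev c.rev).mpr hc
      exact mul_ne_zero (pow_ne_zero _ (by norm_num)) h2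
  -- IsSignedPerm (AD Q)
  have hsp : IsSignedPerm (AD Q) := by
    refine ⟨fun a => ⟨τ a, (hτ a (τ a)).mpr rfl, fun c hc => (hτ a c).mp hc⟩, ?_, ?_⟩
    · intro c
      set r : Fin m := (hcol c.rev).choose with hrdef
      have hr1 : Q r c.rev ≠ 0 := (hcol c.rev).choose_spec.1
      have hr2 : ∀ x, Q x c.rev ≠ 0 → x = r := (hcol c.rev).choose_spec.2
      refine ⟨r.rev, ?_, ?_⟩
      · show AD Q r.rev c ≠ 0
        rw [AD_apply', Fin.rev_rev]
        exact mul_ne_zero (pow_ne_zero _ (by norm_num)) hr1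
      · intro a ha
        rw [AD_apply'] at ha
        have h2 : Q a.rev c.rev ≠ 0 := fun h0 => ha (by rw [h0, mul_zero])
        have := hr2 a.rev h2
        rw [← this, Fin.rev_rev]
    · intro a c hac
      rw [AD_apply'] at hac ⊢
      have h2 : Q a.rev c.rev ≠ 0 := fun h0 => hac (by rw [h0, mul_zero])
      rcases hQ.2.2 _ _ h2 with h | h <;>
        rcases neg_one_pow_eq_or ℝ ((a.rev : ℕ) + (c.rev : ℕ)) with hp | hp <;>
        rw [h, hp] <;> norm_num
  refine ⟨hsp, ?_⟩
  -- counting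
  set c2 : ℕ := (Finset.univ.filter fun r : Fin m => r < i ∧ σ r < j).card with hc2def
  have hNEQ : NE Q i j + c2 = (i : ℕ) := by
    rw [NE_eq_rowcount Q σ hσ, hc2def, ← card_filter_lt i]
    rw [← Finset.card_union_of_disjoint]
    · congr 1
      ext r
      simp only [Finset.mem_union, Finset.mem_filter, Finset.mem_univ, true_and]
      constructor
      · rintro (⟨h1, _⟩ | ⟨h1, _⟩) <;> exact h1
      · intro hr
        rcases lt_trichotomy (σ r) j with h | h | h
        · exact Or.inr ⟨hr, h⟩
        · exact absurd (hσinj (h.trans hσi.symm)) (ne_of_lt hr)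
        · exact Or.inl ⟨hr, h⟩
    · rw [Finset.disjoint_left]
      rintro r hr1 hr2
      simp only [Finset.mem_filter] at hr1 hr2
      exact absurd (hr1.2.2.trans hr2.2.2) (lt_irrefl j)
  have hNEAD : NE (AD Q) i.rev j.rev
      = (Finset.univ.filter fun r : Fin m => i < r ∧ σ r < j).card := by
    rw [NE_eq_rowcount (AD Q) τ hτ]
    apply Finset.card_bij' (fun a _ => a.rev) (fun r _ => r.rev)
    · intro a _; exact Fin.rev_rev a
    · intro r _; exact Fin.rev_rev r
    · intro a ha
      simp only [Finset.mem_filter, Finset.mem_univ, true_and] at ha ⊢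
      obtain ⟨h1, h2⟩ := ha
      constructor
      · rw [Fin.lt_def] at h1 ⊢
        rw [Fin.val_rev] at h1 ⊢
        have := a.isLt; have := i.isLt; omega
      · have h3 : j.rev < (σ a.rev).rev := h2
        rwa [Fin.rev_lt_rev] at h3
    · intro r hr
      simp only [Finset.mem_filter, Finset.mem_univ, true_and] at hr ⊢
      obtain ⟨h1, h2⟩ := hr
      refine ⟨Fin.rev_lt_rev.mpr h1, ?_⟩
      show j.rev < τ r.rev
      simp only [hτdef, Fin.rev_rev]
      exact Fin.rev_lt_rev.mpr h2
  set c3 : ℕ := (Finset.univ.filter fun r : Fin m => i < r ∧ σ r < j).card with hc3def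
  have hcol_count : c2 + c3 = (j : ℕ) := by
    have hjcount : (Finset.univ.filter fun r : Fin m => σ r < j).card = (j : ℕ) := by
      rw [← card_filter_lt j]
      apply Finset.card_bij (fun r _ => σ r)
      · intro r hr
        simp only [Finset.mem_filter, Finset.mem_univ, true_and] at hr ⊢
        exact hr
      · intro x hx y hy h; exact hσinj h
      · intro c hc
        simp only [Finset.mem_filter, Finset.mem_univ, true_and] at hc
        obtain ⟨r, hr⟩ := Finite.surjective_of_injective hσinj c
        exact ⟨r, by simp [hr, hc]⟩
    rw [hc2def, hc3def, ← hjcount, ← Finset.card_union_of_disjoint]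
    · congr 1
      ext r
      simp only [Finset.mem_union, Finset.mem_filter, Finset.mem_univ, true_and]
      constructor
      · rintro (⟨_, h2⟩ | ⟨_, h2⟩) <;> exact h2
      · intro hr
        rcases lt_trichotomy r i with h | h | h
        · exact Or.inl ⟨h, hr⟩
        · rw [h, hσi] at hr; exact absurd hr (lt_irrefl j)
        · exact Or.inr ⟨h, hr⟩
    · rw [Finset.disjoint_left]
      rintro r hr1 hr2
      simp only [Finset.mem_filter] at hr1 hr2
      exact absurd (hr1.2.1.trans hr2.2.1) (lt_irrefl r)
  have hparity : NE Q i j + NE (AD Q) i.rev j.rev + 2 * c2 = (i : ℕ) + (j : ℕ) := by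
    omega
  have hsign : (-1 : ℝ) ^ NE (AD Q) i.rev j.rev
      = (-1 : ℝ) ^ ((i : ℕ) + (j : ℕ)) * (-1 : ℝ) ^ NE Q i j := by
    have h1 : (-1 : ℝ) ^ (NE Q i j + NE (AD Q) i.rev j.rev + 2 * c2)
        = (-1 : ℝ) ^ ((i : ℕ) + (j : ℕ)) := by rw [hparity]
    rw [pow_add, pow_add, pow_mul, neg_one_sq, one_pow, mul_one] at h1
    have h2 : ((-1 : ℝ)) ^ NE Q i j * ((-1 : ℝ)) ^ NE Q i j = 1 := by
      rw [← pow_add, ← two_mul, pow_mul, neg_one_sq, one_pow]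
    calc (-1 : ℝ) ^ NE (AD Q) i.rev j.rev
        = ((-1 : ℝ) ^ NE Q i j * (-1 : ℝ) ^ NE Q i j) * (-1 : ℝ) ^ NE (AD Q) i.rev j.rev := by
          rw [h2, one_mul]
      _ = (-1 : ℝ) ^ ((i : ℕ) + (j : ℕ)) * (-1 : ℝ) ^ NE Q i j := by
          rw [mul_assoc, h1]; ring
  -- deltaRow computations
  have hdQ : deltaRow Q i = Q i j * (-1 : ℝ) ^ NE Q i j := by
    unfold deltaRow
    rw [Finset.sum_eq_single j]
    · intro c _ hc
      have : Q i c = 0 := by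
        by_contra h
        exact hc (((hσ i c).mp h).trans hσi)
      rw [this, zero_mul]
    · intro h; exact absurd (Finset.mem_univ _) h
  have hτi : τ i.rev = j.rev := by simp [hτdef, Fin.rev_rev, hσi]
  have hdAD : deltaRow (AD Q) i.rev = AD Q i.rev j.rev * (-1 : ℝ) ^ NE (AD Q) i.rev j.rev := by
    unfold deltaRow
    rw [Finset.sum_eq_single j.rev]
    · intro c _ hc
      have : AD Q i.rev c = 0 := by
        by_contra h
        exact hc (((hτ i.rev c).mp h).trans hτi)
      rw [this, zero_mul]
    · intro h; exact absurd (Finset.mem_univ _) h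
  rw [hdAD, hdQ, AD_apply', Fin.rev_rev, Fin.rev_rev, hsign]
  have hsq : ((-1 : ℝ)) ^ ((i : ℕ) + (j : ℕ)) * (-1 : ℝ) ^ ((i : ℕ) + (j : ℕ)) = 1 := by
    rw [← pow_add, ← two_mul, pow_mul, neg_one_sq, one_pow]
  linear_combination (Q i j * (-1 : ℝ) ^ NE Q i j) * hsq
end
end

section
/- Let m ≥ 1, let Q be an m×m signed permutation matrix, and let i, j be indices with Q_{i,j} ≠ 0. Then TR(Q) is a signed permutation matrix and δ_j(TR(Q)) = δ_i(Q). -/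
open Matrix
open scoped Classical

noncomputable section

/-!
`TR Q` has the support of `Qᵀ`, with entry `(-1) ^ (a + b) * Q b a` at `(a, b)`; in particular
`NE (TR Q) j i = SW Q i j`. For a nonzero entry `Q i j`, the rows above `i` carry exactly `i`
nonzero entries, none in column `j`, so `NW Q i j + NE Q i j = i`; symmetrically
`NW Q i j + SW Q i j = j`. The sign exponents of `δ_j (TR Q)` and `δ_i Q` therefore differ by
`i + j + SW Q i j - NE Q i j = 2 (NW Q i j + SW Q i j)`.
-/

def NW {m : ℕ} (Q : Matrix (Fin m) (Fin m) ℝ) (i j : Fin m) : ℕ :=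
  (Finset.univ.filter fun p : Fin m × Fin m => p.1 < i ∧ p.2 < j ∧ Q p.1 p.2 ≠ 0).card

section

variable {m : ℕ} {Q : Matrix (Fin m) (Fin m) ℝ}

lemma TR_apply (Q : Matrix (Fin m) (Fin m) ℝ) (a b : Fin m) :
    TR Q a b = (-1 : ℝ) ^ ((a : ℕ) + (b : ℕ)) * Q b a := by
  simp only [TR, Jplus, mul_diagonal, diagonal_mul, transpose_apply, pow_add]
  ring

lemma TR_apply_ne_zero_iff (Q : Matrix (Fin m) (Fin m) ℝ) (a b : Fin m) :
    TR Q a b ≠ 0 ↔ Q b a ≠ 0 := by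
  simp [TR_apply]

lemma IsSignedPerm.TR (hQ : IsSignedPerm Q) : IsSignedPerm (TR Q) := by
  obtain ⟨hrow, hcol, hval⟩ := hQ
  simp only [IsSignedPerm, TR_apply_ne_zero_iff]
  refine ⟨hcol, hrow, fun a b hab => ?_⟩
  rw [TR_apply]
  rcases hval b a hab with h | h <;> rcases neg_one_pow_eq_or ℝ ((a : ℕ) + b) with e | e <;>
    simp [h, e]

lemma NE_TR (Q : Matrix (Fin m) (Fin m) ℝ) (i j : Fin m) : NE (TR Q) j i = SW Q i j := by
  unfold SW NE
  congr 1
  ext p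
  rw [Finset.mem_filter, Finset.mem_filter, TR_apply_ne_zero_iff, transpose_apply]

lemma NW_transpose (Q : Matrix (Fin m) (Fin m) ℝ) (i j : Fin m) : NW Qᵀ j i = NW Q i j :=
  Finset.card_equiv (Equiv.prodComm _ _) fun p => by
    rw [Finset.mem_filter, Finset.mem_filter]
    simp [and_left_comm]

lemma deltaRow_eq_of_ne_zero {i j : Fin m} (hj : ∀ k, Q i k ≠ 0 → k = j) :
    deltaRow Q i = Q i j * (-1 : ℝ) ^ NE Q i j :=
  Finset.sum_eq_single j (fun k _ hk => by rw [not_imp_comm.1 (hj k) hk, zero_mul])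
    (fun h => absurd (Finset.mem_univ j) h)

lemma card_nonzero_above (hrow : ∀ k, ∃! l, Q k l ≠ 0) (i : Fin m) :
    (Finset.univ.filter fun p : Fin m × Fin m => p.1 < i ∧ Q p.1 p.2 ≠ 0).card = i := by
  choose σ hσ using hrow
  rw [← Fin.card_Iio i]
  refine Finset.card_bij' (fun p _ => p.1) (fun k _ => (k, σ k)) ?_ ?_ ?_ (fun _ _ => rfl)
  · simp +contextual
  · simp +contextual [(hσ _).1]
  · rintro ⟨k, l⟩ hkl
    simp only [Finset.mem_filter, Finset.mem_univ, true_and] at hkl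
    exact Prod.ext rfl ((hσ k).2 l hkl.2).symm

lemma NW_add_NE (hrow : ∀ k, ∃! l, Q k l ≠ 0) {i j : Fin m} (hj : ∀ k, Q k j ≠ 0 → k = i) :
    NW Q i j + NE Q i j = i := by
  rw [← card_nonzero_above hrow i, ← Finset.card_filter_add_card_filter_not (p := fun p => p.2 < j),
    Finset.filter_filter, Finset.filter_filter, NW, NE]
  have hl : ∀ k l, k < i → Q k l ≠ 0 → l ≠ j := fun k l hk hkl hlj => hk.ne (hj k (hlj ▸ hkl))
  congr 2 <;> ext ⟨k, l⟩ <;> simp only [Finset.mem_filter, Finset.mem_univ, true_and, not_lt]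
  · tauto
  · exact ⟨fun h => ⟨⟨h.1, h.2.2⟩, h.2.1.le⟩,
      fun h => ⟨h.1.1, lt_of_le_of_ne h.2 (hl k l h.1.1 h.1.2).symm, h.1.2⟩⟩

end

theorem stmt2_general (m : ℕ) (Q : Matrix (Fin m) (Fin m) ℝ) (hQ : IsSignedPerm Q)
    (i j : Fin m) (hij : Q i j ≠ 0) :
    IsSignedPerm (TR Q) ∧ deltaRow (TR Q) j = deltaRow Q i := by
  have hTR := hQ.TR
  obtain ⟨hrow, hcol, -⟩ := hQ
  refine ⟨hTR, ?_⟩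
  have hrows : NW Q i j + NE Q i j = i :=
    NW_add_NE hrow fun k hk => (hcol j).unique hk hij
  have hcols : NW Q i j + SW Q i j = j := by
    rw [← NW_transpose]
    exact NW_add_NE hcol fun l hl => (hrow i).unique hl hij
  have hparity : (-1 : ℝ) ^ ((j : ℕ) + i + SW Q i j) = (-1) ^ NE Q i j := by
    rw [show (j : ℕ) + i + SW Q i j = 2 * (NW Q i j + SW Q i j) + NE Q i j by omega,
      pow_add, pow_mul]
    norm_num
  calc deltaRow (TR Q) j
      = TR Q j i * (-1 : ℝ) ^ NE (TR Q) j i :=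
        deltaRow_eq_of_ne_zero fun k hk => (hTR.1 j).unique hk ((TR_apply_ne_zero_iff Q j i).2 hij)
    _ = Q i j * (-1 : ℝ) ^ ((j : ℕ) + i + SW Q i j) := by rw [TR_apply, NE_TR, pow_add]; ring
    _ = deltaRow Q i := by
        rw [hparity, deltaRow_eq_of_ne_zero fun l hl => (hrow i).unique hl hij]

theorem stmt2 (m : ℕ) (hm : 1 ≤ m) (Q : Matrix (Fin m) (Fin m) ℝ) (hQ : IsSignedPerm Q)
    (i j : Fin m) (hij : Q i j ≠ 0) :
    IsSignedPerm (TR Q) ∧ deltaRow (TR Q) j = deltaRow Q i :=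
  stmt2_general m Q hQ i j hij
end
end

section
/- Let n ≥ 1, let γ : ℝ → ℝ^{n+1} be a smooth curve that is positive locally convex on [0,1], and let M ∈ SO(n+1). Then the curve γ^{TR}(t) := J₊·M·γ(1−t) is positive locally convex on [0,1] and its Frenet frame satisfies F_{γ^{TR}}(t) = J₊·M·F_γ(1−t)·J₊ for all t ∈ [0,1]. In particular, if F_γ(0) = I and M = F_γ(1)ᵀ, then F_{γ^{TR}}(0) = I and F_{γ^{TR}}(1) = J₊·F_γ(1)ᵀ·J₊. -/
/-!
Differentiating `γ (1 - t)` `j` times produces the sign `(-1) ^ j`, so the Wronskian matrix of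
`γ^{TR}` at `t` is `J₊ M W_γ(1 - t) J₊`; its determinant is `W_γ(1 - t)` because `(det J₊)² = 1`.
Right-multiplying `W_γ(1 - t) = F R` by `J₊ = J₊⁻¹` gives the factorisation
`(J₊ M F J₊) (J₊ R J₊)`: the first factor lies in `SO(n+1)`, and conjugation by `J₊` changes the
`(i, j)` entry of `R` by the sign `(-1) ^ (i + j)`, which keeps it upper triangular with the same
diagonal.
-/

open Matrix
open scoped Classical

noncomputable section

lemma iteratedDeriv_mulVec {m n : Type*} [Fintype m] [Fintype n] (A : Matrix m n ℝ)
    {f : ℝ → n → ℝ} {k : ℕ} {t : ℝ} (hf : ContDiffAt ℝ k f t) :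
    iteratedDeriv k (fun x => A *ᵥ f x) t = A *ᵥ iteratedDeriv k f t := by
  let L : (n → ℝ) →L[ℝ] (m → ℝ) := LinearMap.toContinuousLinearMap A.mulVecLin
  change iteratedDeriv k (L ∘ f) t = L (iteratedDeriv k f t)
  rw [iteratedDeriv_eq_iteratedFDeriv, L.iteratedFDeriv_comp_left hf le_rfl]
  rfl

lemma Jplus_transpose (m : ℕ) : (Jplus m)ᵀ = Jplus m := diagonal_transpose _

lemma Jplus_mul_self (m : ℕ) : Jplus m * Jplus m = 1 := by
  rw [Jplus, diagonal_mul_diagonal, ← diagonal_one]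
  congr 1
  ext i
  rw [← pow_add, Even.neg_one_pow ⟨i, rfl⟩]

lemma Jplus_mem_orthogonalGroup (m : ℕ) : Jplus m ∈ orthogonalGroup (Fin m) ℝ := by
  rw [mem_orthogonalGroup_iff', Jplus_transpose, Jplus_mul_self]

lemma det_Jplus_mul_self (m : ℕ) : (Jplus m).det * (Jplus m).det = 1 := by
  rw [← det_mul, Jplus_mul_self, det_one]

lemma IsUpperPos.diagonal_mul_mul_diagonal {m : ℕ} {R : Matrix (Fin m) (Fin m) ℝ}
    (hR : IsUpperPos R) {d : Fin m → ℝ} (hd : ∀ i, d i ≠ 0) :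
    IsUpperPos (diagonal d * R * diagonal d) := by
  refine ⟨fun i j hji => ?_, fun i => ?_⟩
  · simp [mul_diagonal, diagonal_mul, hR.1 i j hji]
  · rw [mul_diagonal, diagonal_mul, mul_right_comm, ← sq]
    exact mul_pos (sq_pos_of_ne_zero (hd i)) (hR.2 i)

lemma IsUpperPos.Jplus_conj {m : ℕ} {R : Matrix (Fin m) (Fin m) ℝ} (hR : IsUpperPos R) :
    IsUpperPos (Jplus m * R * Jplus m) :=
  hR.diagonal_mul_mul_diagonal fun _ => pow_ne_zero _ (by norm_num)

lemma Wmat_mulVec_comp_one_sub {m : ℕ} (A : Matrix (Fin m) (Fin m) ℝ) {γ : ℝ → Fin m → ℝ}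
    (hγ : ContDiff ℝ (⊤ : ℕ∞) γ) (t : ℝ) :
    Wmat (fun x => A *ᵥ γ (1 - x)) t = A * Wmat γ (1 - t) * Jplus m := by
  have hγ' : ContDiff ℝ (⊤ : ℕ∞) (fun x => γ (1 - x)) := hγ.comp (contDiff_const.sub contDiff_id)
  ext i j
  rw [Wmat, of_apply, iteratedDeriv_mulVec A (hγ'.contDiffAt.of_le (by exact_mod_cast le_top)),
    iteratedDeriv_comp_const_sub, Jplus, mul_diagonal]
  simp only [Wmat, of_apply, mulVec, dotProduct, mul_apply, Pi.smul_apply, smul_eq_mul,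
    Finset.sum_mul]
  exact Finset.sum_congr rfl fun _ _ => by ring

lemma wronskian_timeReversal {m : ℕ} {M : Matrix (Fin m) (Fin m) ℝ} (hMdet : M.det = 1)
    {γ : ℝ → Fin m → ℝ} (hγ : ContDiff ℝ (⊤ : ℕ∞) γ) (t : ℝ) :
    Wronskian (fun x => (Jplus m * M) *ᵥ γ (1 - x)) t = Wronskian γ (1 - t) := by
  rw [Wronskian, Wronskian, Wmat_mulVec_comp_one_sub _ hγ, det_mul, det_mul, det_mul, hMdet,
    mul_one, mul_right_comm, det_Jplus_mul_self, one_mul]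

lemma IsFrameAt.timeReversal {m : ℕ} {M : Matrix (Fin m) (Fin m) ℝ} (hM : Mᵀ * M = 1)
    (hMdet : M.det = 1) {γ : ℝ → Fin m → ℝ} (hγ : ContDiff ℝ (⊤ : ℕ∞) γ) {t : ℝ}
    {F : Matrix (Fin m) (Fin m) ℝ} (hF : IsFrameAt γ (1 - t) F) :
    IsFrameAt (fun x => (Jplus m * M) *ᵥ γ (1 - x)) t (Jplus m * M * F * Jplus m) := by
  obtain ⟨hForth, hFdet, R, hR, hW⟩ := hF
  have hJ := Jplus_mem_orthogonalGroup m
  refine ⟨(mem_orthogonalGroup_iff' _ _).1 <| mul_mem (mul_mem (mul_mem hJ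
      ((mem_orthogonalGroup_iff' _ _).2 hM)) ((mem_orthogonalGroup_iff' _ _).2 hForth)) hJ,
    ?_, Jplus m * R * Jplus m, hR.Jplus_conj, ?_⟩
  · rw [det_mul, det_mul, det_mul, hMdet, hFdet, mul_one, mul_one, det_Jplus_mul_self]
  · rw [Wmat_mulVec_comp_one_sub _ hγ, hW]
    simp only [Matrix.mul_assoc, ← Matrix.mul_assoc (Jplus m) (Jplus m), Jplus_mul_self,
      Matrix.one_mul]

theorem stmt14_general (n : ℕ) (γ : ℝ → Fin (n+1) → ℝ) (hγ : ContDiff ℝ (⊤ : ℕ∞) γ)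
    (hconv : PosLocConv γ) (M : Matrix (Fin (n+1)) (Fin (n+1)) ℝ)
    (hM : Mᵀ * M = 1) (hMdet : M.det = 1)
    (F : ℝ → Matrix (Fin (n+1)) (Fin (n+1)) ℝ) (hF : IsFrenet γ F) :
    PosLocConv (fun t => (Jplus (n+1) * M).mulVec (γ (1 - t))) ∧
      IsFrenet (fun t => (Jplus (n+1) * M).mulVec (γ (1 - t)))
        (fun t => Jplus (n+1) * M * F (1 - t) * Jplus (n+1)) ∧
      (F 0 = 1 → M = (F 1)ᵀ →
        Jplus (n+1) * M * F 1 * Jplus (n+1) = 1 ∧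
        Jplus (n+1) * M * F 0 * Jplus (n+1) = Jplus (n+1) * (F 1)ᵀ * Jplus (n+1)) := by
  refine ⟨fun t ht => ?_,
    fun t ht => (hF _ (Set.Icc.mem_iff_one_sub_mem.1 ht)).timeReversal hM hMdet hγ,
    fun hF0 hM1 => ⟨?_, ?_⟩⟩
  · rw [wronskian_timeReversal hMdet hγ]
    exact hconv _ (Set.Icc.mem_iff_one_sub_mem.1 ht)
  · have hF1 : (F 1)ᵀ * F 1 = 1 := (hF 1 ⟨zero_le_one, le_rfl⟩).1
    rw [hM1, Matrix.mul_assoc _ (F 1)ᵀ, hF1, Matrix.mul_one, Jplus_mul_self]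
  · rw [hF0, Matrix.mul_one, hM1]

theorem stmt14 (n : ℕ) (hn : 1 ≤ n) (γ : ℝ → Fin (n+1) → ℝ) (hγ : ContDiff ℝ (⊤ : ℕ∞) γ)
    (hconv : PosLocConv γ) (M : Matrix (Fin (n+1)) (Fin (n+1)) ℝ)
    (hM : Mᵀ * M = 1) (hMdet : M.det = 1)
    (F : ℝ → Matrix (Fin (n+1)) (Fin (n+1)) ℝ) (hF : IsFrenet γ F) :
    PosLocConv (fun t => (Jplus (n+1) * M).mulVec (γ (1 - t))) ∧
      IsFrenet (fun t => (Jplus (n+1) * M).mulVec (γ (1 - t)))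
        (fun t => Jplus (n+1) * M * F (1 - t) * Jplus (n+1)) ∧
      (F 0 = 1 → M = (F 1)ᵀ →
        Jplus (n+1) * M * F 1 * Jplus (n+1) = 1 ∧
        Jplus (n+1) * M * F 0 * Jplus (n+1) = Jplus (n+1) * (F 1)ᵀ * Jplus (n+1)) :=
  stmt14_general n γ hγ hconv M hM hMdet F hF

end
end
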